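/- For every T > 0 and every τ ≥ 0, one has ξ_T(τ) > 0. (Positivity of the 1-cycle output: since A is Metzler, e^{sA} has nonnegative entries for s ≥ 0, (I − e^{TA})⁻¹ = Σ_{k≥0} e^{kTA} entrywise, and the (3,1)-entry of e^{sA} is strictly positive for s > 0.) -/

import Mathlib

open Matrix

/-- The system matrix of the third-order PK model. -/
noncomputable def Amat (a₁ a₂ a₃ g₁ g₂ : ℝ) : Matrix (Fin 3) (Fin 3) ℝ :=
  !![-a₁, 0, 0; g₁, -a₂, 0; 0, g₂, -a₃]

/-- The input vector `B = (1,0,0)ᵀ`. -/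
noncomputable def Bvec : Fin 3 → ℝ := ![1, 0, 0]

/-- The output map `C x = x₃`. -/
noncomputable def Cout (x : Fin 3 → ℝ) : ℝ := x 2

/-- `ξ_T(τ) = C e^{τA} (I − e^{TA})⁻¹ B`, the output at phase `τ` of the 1-cycle
with unit dose and inter-dose interval `T`. -/
noncomputable def xi (a₁ a₂ a₃ g₁ g₂ : ℝ) (T τ : ℝ) : ℝ :=
  Cout ((NormedSpace.exp (τ • Amat a₁ a₂ a₃ g₁ g₂) *
    (1 - NormedSpace.exp (T • Amat a₁ a₂ a₃ g₁ g₂))⁻¹).mulVec Bvec)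

/-!
Write `E = e^{TA}` and `y = (I − E)⁻¹ B`, so that `ξ_T(τ) = (e^{τA} y)₃`.
Because `A` is Metzler, `e^{sA} = e^{-cs} e^{s(A + cI)}` with `A + cI ≥ 0` entrywise, so
`e^{sA}` is entrywise nonnegative, and for `s > 0` its `(3,1)` entry is at least
`e^{-cs} s² g₂ g₁ / 2 > 0`.
Because `A` is lower triangular, so is `E`, with diagonal `e^{-aᵢT} < 1`; forward substitution in
`(I − E) y = B` gives `y ≥ 0`, and then `y = B + E y ≥ B + E B` gives `y₃ ≥ E₃₁ > 0`.
Hence `ξ_T(τ) ≥ (e^{τA})₃₃ y₃ > 0`. (Lean indices are 0-based: `E₃₁` is `E 2 0`.)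
-/

open NormedSpace Finset
open scoped Nat

namespace Matrix

variable {n : Type*} [Fintype n]

section OrderedSemiring

variable {R : Type*} [Semiring R] [PartialOrder R] [IsOrderedRing R]

theorem mulVec_mono {m : Type*} {M : Matrix m n R} (hM : ∀ i j, 0 ≤ M i j) {v w : n → R}
    (hvw : v ≤ w) : M *ᵥ v ≤ M *ᵥ w :=
  fun i => sum_le_sum fun k _ => mul_le_mul_of_nonneg_left (hvw k) (hM i k)

theorem mulVec_nonneg {m : Type*} {M : Matrix m n R} (hM : ∀ i j, 0 ≤ M i j) {v : n → R}
    (hv : 0 ≤ v) : 0 ≤ M *ᵥ v := by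
  simpa using mulVec_mono hM hv

theorem single_le_mulVec_apply {m : Type*} {M : Matrix m n R} (hM : ∀ i j, 0 ≤ M i j)
    {v : n → R} (hv : 0 ≤ v) (i : m) (j : n) : M i j * v j ≤ (M *ᵥ v) i :=
  single_le_sum (fun k _ => mul_nonneg (hM i k) (hv k)) (mem_univ j)

end OrderedSemiring

variable [DecidableEq n]

theorem hasSum_exp_apply {𝕂 : Type*} [RCLike 𝕂] (M : Matrix n n 𝕂) (i j : n) :
    HasSum (fun k : ℕ => (k !⁻¹ : 𝕂) * (M ^ k) i j) (exp M i j) := by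
  open scoped Norms.Operator in
  exact Pi.hasSum.1 (Pi.hasSum.1 (exp_series_hasSum_exp' (𝕂 := 𝕂) M) i) j

theorem IsLowerTriangular.pow_apply_self [LinearOrder n] {R : Type*} [Semiring R]
    {M : Matrix n n R} (hM : M.IsLowerTriangular) (k : ℕ) (i : n) :
    (M ^ k) i i = M i i ^ k := by
  induction k with
  | zero => simp
  | succ k ih =>
    rw [pow_succ, mul_apply, sum_eq_single i, ih, pow_succ]
    · intro j _ hji
      rcases hji.lt_or_gt with hji | hij
      · rw [hM (show OrderDual.toDual i < OrderDual.toDual j from hji), mul_zero]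
      · rw [hM.pow k (show OrderDual.toDual j < OrderDual.toDual i from hij), zero_mul]
    · exact (absurd (mem_univ i) ·)

theorem IsLowerTriangular.exp_apply_self [LinearOrder n] {𝕂 : Type*} [RCLike 𝕂]
    {M : Matrix n n 𝕂} (hM : M.IsLowerTriangular) (i : n) :
    exp M i i = exp (M i i) := by
  have h := hasSum_exp_apply M i i
  simp_rw [hM.pow_apply_self] at h
  exact h.unique (by simpa only [smul_eq_mul] using exp_series_hasSum_exp' (𝕂 := 𝕂) (M i i))

theorem exp_apply_nonneg_of_nonneg {M : Matrix n n ℝ} (hM : ∀ i j, 0 ≤ M i j) (i j : n) :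
    0 ≤ exp M i j :=
  (hasSum_exp_apply M i j).nonneg fun k => mul_nonneg (by positivity) (pow_apply_nonneg hM k i j)

theorem pow_apply_div_factorial_le_exp_apply {M : Matrix n n ℝ} (hM : ∀ i j, 0 ≤ M i j)
    (k : ℕ) (i j : n) : (k !⁻¹ : ℝ) * (M ^ k) i j ≤ exp M i j :=
  le_hasSum (hasSum_exp_apply M i j) k fun l _ =>
    mul_nonneg (by positivity) (pow_apply_nonneg hM l i j)

theorem exp_add_smul_one (M : Matrix n n ℝ) (c : ℝ) :
    exp (M + c • 1) = Real.exp c • exp M := by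
  have hc : exp (algebraMap ℝ (Matrix n n ℝ) c) = algebraMap ℝ _ (Real.exp c) := by
    open scoped Norms.Operator in
    rw [Real.exp_eq_exp_ℝ]
    exact (algebraMap_exp_comm c).symm
  rw [← Algebra.algebraMap_eq_smul_one, exp_add_of_commute _ _ (Algebra.commutes c M).symm, hc,
    ← Algebra.commutes, Algebra.smul_def]

def IsMetzler (M : Matrix n n ℝ) : Prop :=
  ∀ i j, i ≠ j → 0 ≤ M i j

theorem IsMetzler.exists_nonneg_add_smul_one {M : Matrix n n ℝ} (hM : M.IsMetzler) :
    ∃ c : ℝ, ∀ i j, 0 ≤ (M + c • 1) i j := by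
  refine ⟨∑ i, |M i i|, fun i j => ?_⟩
  rcases eq_or_ne i j with rfl | hij
  · have hle := single_le_sum (fun k _ => abs_nonneg (M k k)) (mem_univ i)
    simp only [add_apply, smul_apply, one_apply_eq, smul_eq_mul, mul_one]
    linarith [neg_abs_le (M i i)]
  · simpa [one_apply_ne hij] using hM i j hij

theorem IsMetzler.exp_apply_nonneg {M : Matrix n n ℝ} (hM : M.IsMetzler) (i j : n) :
    0 ≤ exp M i j := by
  obtain ⟨c, hc⟩ := hM.exists_nonneg_add_smul_one
  have hshift := exp_apply_nonneg_of_nonneg hc i j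
  rw [exp_add_smul_one, smul_apply, smul_eq_mul] at hshift
  exact nonneg_of_mul_nonneg_right hshift (Real.exp_pos c)

theorem IsMetzler.exp_apply_pos_of_pos_of_pos {M : Matrix n n ℝ} (hM : M.IsMetzler)
    {i k j : n} (hik : i ≠ k) (hkj : k ≠ j) (h₁ : 0 < M i k) (h₂ : 0 < M k j) :
    0 < exp M i j := by
  obtain ⟨c, hc⟩ := hM.exists_nonneg_add_smul_one
  set N := M + c • 1 with hN
  have hpath : N i k * N k j ≤ (N ^ 2) i j := by
    rw [sq, mul_apply]
    exact single_le_sum (fun l _ => mul_nonneg (hc i l) (hc l j)) (mem_univ k)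
  have hpos : 0 < (2 !⁻¹ : ℝ) * (N ^ 2) i j := by
    simp only [hN, add_apply, smul_apply, one_apply_ne hik, one_apply_ne hkj, smul_zero,
      add_zero] at hpath
    exact mul_pos (by positivity) ((mul_pos h₁ h₂).trans_le hpath)
  have hshift := hpos.trans_le (pow_apply_div_factorial_le_exp_apply hc 2 i j)
  rw [exp_add_smul_one, smul_apply, smul_eq_mul] at hshift
  exact pos_of_mul_pos_right hshift (Real.exp_pos c).le

theorem IsLowerTriangular.isUnit_det_one_sub [LinearOrder n] {K : Type*} [Field K]
    {E : Matrix n n K} (hE : E.IsLowerTriangular) (hdiag : ∀ i, E i i ≠ 1) :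
    IsUnit (1 - E).det := by
  rw [det_of_isLowerTriangular _ (blockTriangular_one.sub hE)]
  exact (prod_ne_zero_iff.2 fun i _ => by simpa [sub_eq_zero] using (hdiag i).symm).isUnit

theorem inv_one_sub_mulVec_eq_add {K : Type*} [Field K] {E : Matrix n n K}
    (hE : IsUnit (1 - E).det) (b : n → K) :
    (1 - E)⁻¹ *ᵥ b = b + E *ᵥ ((1 - E)⁻¹ *ᵥ b) := by
  calc (1 - E)⁻¹ *ᵥ b = ((1 - E) + E) *ᵥ ((1 - E)⁻¹ *ᵥ b) := by
        rw [sub_add_cancel, one_mulVec]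
    _ = b + E *ᵥ ((1 - E)⁻¹ *ᵥ b) := by
      rw [add_mulVec, mulVec_mulVec, mul_nonsing_inv _ hE, one_mulVec]

section OrderedField

variable {K : Type*} [Field K] [LinearOrder K] [IsStrictOrderedRing K]

theorem IsLowerTriangular.nonneg_of_mulVec_nonneg [LinearOrder n] {U : Matrix n n K}
    (hU : U.IsLowerTriangular) (hdiag : ∀ i, 0 < U i i) (hoff : ∀ i j, i ≠ j → U i j ≤ 0)
    {y : n → K} (hy : 0 ≤ U *ᵥ y) : 0 ≤ y := by
  intro i
  induction i using WellFoundedLT.induction with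
  | _ i ih =>
  have hsplit : (U *ᵥ y) i = U i i * y i + ∑ j ∈ univ.erase i, U i j * y j := by
    rw [mulVec, dotProduct, ← add_sum_erase _ _ (mem_univ i)]
  have hrest : ∑ j ∈ univ.erase i, U i j * y j ≤ 0 := sum_nonpos fun j hj => by
    have hji := ne_of_mem_erase hj
    rcases hji.lt_or_gt with hji' | hij
    · exact mul_nonpos_of_nonpos_of_nonneg (hoff i j hji.symm) (ih j hji')
    · rw [hU (show OrderDual.toDual j < OrderDual.toDual i from hij), zero_mul]
  have hyi : 0 ≤ (U *ᵥ y) i := hy i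
  exact nonneg_of_mul_nonneg_right (by linarith) (hdiag i)

theorem IsLowerTriangular.inv_one_sub_mulVec_nonneg [LinearOrder n] {E : Matrix n n K}
    (hE : E.IsLowerTriangular) (hE₀ : ∀ i j, 0 ≤ E i j) (hdiag : ∀ i, E i i < 1)
    {b : n → K} (hb : 0 ≤ b) :
    0 ≤ (1 - E)⁻¹ *ᵥ b := by
  have hU : (1 - E).IsLowerTriangular := blockTriangular_one.sub hE
  refine hU.nonneg_of_mulVec_nonneg (fun i => ?_) (fun i j hij => ?_) ?_
  · simpa using hdiag i
  · simpa [one_apply_ne hij] using hE₀ i j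
  · rwa [mulVec_mulVec, mul_nonsing_inv _ (hE.isUnit_det_one_sub fun i => (hdiag i).ne),
      one_mulVec]

theorem IsLowerTriangular.add_mulVec_le_inv_one_sub_mulVec [LinearOrder n] {E : Matrix n n K}
    (hE : E.IsLowerTriangular) (hE₀ : ∀ i j, 0 ≤ E i j) (hdiag : ∀ i, E i i < 1)
    {b : n → K} (hb : 0 ≤ b) :
    b + E *ᵥ b ≤ (1 - E)⁻¹ *ᵥ b := by
  set y := (1 - E)⁻¹ *ᵥ b
  have hy : y = b + E *ᵥ y :=
    inv_one_sub_mulVec_eq_add (hE.isUnit_det_one_sub fun i => (hdiag i).ne) b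
  have hby : b ≤ y :=
    calc b ≤ b + E *ᵥ y :=
          le_add_of_nonneg_right (mulVec_nonneg hE₀ (hE.inv_one_sub_mulVec_nonneg hE₀ hdiag hb))
      _ = y := hy.symm
  calc b + E *ᵥ b ≤ b + E *ᵥ y := add_le_add le_rfl (mulVec_mono hE₀ hby)
    _ = y := hy.symm

end OrderedField

end Matrix

section Amat

variable {a₁ a₂ a₃ g₁ g₂ : ℝ}

theorem isLowerTriangular_smul_Amat (s : ℝ) :
    (s • Amat a₁ a₂ a₃ g₁ g₂).IsLowerTriangular := by
  intro i j hij
  rw [OrderDual.toDual_lt_toDual] at hij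
  fin_cases i <;> fin_cases j <;> simp_all [Amat]

theorem isLowerTriangular_exp_smul_Amat (s : ℝ) :
    (exp (s • Amat a₁ a₂ a₃ g₁ g₂)).IsLowerTriangular :=
  (isLowerTriangular_smul_Amat s).exp

theorem isMetzler_smul_Amat (hg₁ : 0 ≤ g₁) (hg₂ : 0 ≤ g₂) {s : ℝ} (hs : 0 ≤ s) :
    (s • Amat a₁ a₂ a₃ g₁ g₂).IsMetzler := by
  intro i j hij
  fin_cases i <;> fin_cases j <;> simp [Amat] at hij ⊢ <;> positivity

theorem exp_smul_Amat_apply_self (s : ℝ) (i : Fin 3) :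
    exp (s • Amat a₁ a₂ a₃ g₁ g₂) i i = Real.exp (s * Amat a₁ a₂ a₃ g₁ g₂ i i) := by
  rw [(isLowerTriangular_smul_Amat s).exp_apply_self, Real.exp_eq_exp_ℝ, Matrix.smul_apply,
    smul_eq_mul]

theorem exp_smul_Amat_apply_self_lt_one (ha₁ : 0 < a₁) (ha₂ : 0 < a₂) (ha₃ : 0 < a₃)
    {s : ℝ} (hs : 0 < s) (i : Fin 3) : exp (s • Amat a₁ a₂ a₃ g₁ g₂) i i < 1 := by
  rw [exp_smul_Amat_apply_self, Real.exp_lt_one_iff]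
  refine mul_neg_of_pos_of_neg hs ?_
  fin_cases i <;> simpa [Amat]

theorem exp_smul_Amat_apply_two_zero_pos (hg₁ : 0 < g₁) (hg₂ : 0 < g₂) {s : ℝ}
    (hs : 0 < s) : 0 < exp (s • Amat a₁ a₂ a₃ g₁ g₂) 2 0 :=
  (isMetzler_smul_Amat hg₁.le hg₂.le hs.le).exp_apply_pos_of_pos_of_pos (k := 1)
    (by decide) (by decide)
    (by simpa [Amat] using mul_pos hs hg₂) (by simpa [Amat] using mul_pos hs hg₁)

theorem Bvec_nonneg : 0 ≤ Bvec := by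
  intro i; fin_cases i <;> simp [Bvec]

/-- The state `(I − e^{TA})⁻¹ B` of the 1-cycle right after a dose. -/
noncomputable def cycleState (a₁ a₂ a₃ g₁ g₂ T : ℝ) : Fin 3 → ℝ :=
  (1 - exp (T • Amat a₁ a₂ a₃ g₁ g₂))⁻¹ *ᵥ Bvec

theorem xi_eq_mulVec_cycleState (T τ : ℝ) :
    xi a₁ a₂ a₃ g₁ g₂ T τ =
      (exp (τ • Amat a₁ a₂ a₃ g₁ g₂) *ᵥ cycleState a₁ a₂ a₃ g₁ g₂ T) 2 := by
  rw [xi, Cout, cycleState, mulVec_mulVec]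

theorem cycleState_nonneg (ha₁ : 0 < a₁) (ha₂ : 0 < a₂) (ha₃ : 0 < a₃) (hg₁ : 0 ≤ g₁)
    (hg₂ : 0 ≤ g₂) {T : ℝ} (hT : 0 < T) : 0 ≤ cycleState a₁ a₂ a₃ g₁ g₂ T :=
  (isLowerTriangular_exp_smul_Amat T).inv_one_sub_mulVec_nonneg
    (isMetzler_smul_Amat hg₁ hg₂ hT.le).exp_apply_nonneg
    (exp_smul_Amat_apply_self_lt_one ha₁ ha₂ ha₃ hT) Bvec_nonneg

theorem cycleState_two_pos (ha₁ : 0 < a₁) (ha₂ : 0 < a₂) (ha₃ : 0 < a₃) (hg₁ : 0 < g₁)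
    (hg₂ : 0 < g₂) {T : ℝ} (hT : 0 < T) : 0 < cycleState a₁ a₂ a₃ g₁ g₂ T 2 := by
  set E := exp (T • Amat a₁ a₂ a₃ g₁ g₂)
  have hle := (isLowerTriangular_exp_smul_Amat T).add_mulVec_le_inv_one_sub_mulVec
    (isMetzler_smul_Amat hg₁.le hg₂.le hT.le).exp_apply_nonneg
    (exp_smul_Amat_apply_self_lt_one ha₁ ha₂ ha₃ hT) Bvec_nonneg 2
  have hB : (Bvec + E *ᵥ Bvec) 2 = E 2 0 := by
    simp [Bvec, mulVec, dotProduct, Fin.sum_univ_three]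
  rw [hB] at hle
  exact (exp_smul_Amat_apply_two_zero_pos hg₁ hg₂ hT).trans_le hle

end Amat

/-- Positivity of the 1-cycle output: `ξ_T(τ) > 0` for every `T > 0` and `τ ≥ 0`. -/
theorem xi_pos
    (a₁ a₂ a₃ g₁ g₂ : ℝ)
    (ha₁ : 0 < a₁) (ha₂ : 0 < a₂) (ha₃ : 0 < a₃) (hg₁ : 0 < g₁) (hg₂ : 0 < g₂)
    (T τ : ℝ) (hT : 0 < T) (hτ : 0 ≤ τ) :
    0 < xi a₁ a₂ a₃ g₁ g₂ T τ := by
  rw [xi_eq_mulVec_cycleState]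
  have hF₂₂ : 0 < exp (τ • Amat a₁ a₂ a₃ g₁ g₂) 2 2 := by
    rw [exp_smul_Amat_apply_self]; positivity
  calc 0 < exp (τ • Amat a₁ a₂ a₃ g₁ g₂) 2 2 * cycleState a₁ a₂ a₃ g₁ g₂ T 2 :=
        mul_pos hF₂₂ (cycleState_two_pos ha₁ ha₂ ha₃ hg₁ hg₂ hT)
    _ ≤ _ := single_le_mulVec_apply (isMetzler_smul_Amat hg₁.le hg₂.le hτ).exp_apply_nonneg
        (cycleState_nonneg ha₁ ha₂ ha₃ hg₁.le hg₂.le hT) 2 2
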